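/- Let S ≥ 2, let α, β ∈ ℝ with 0 ≤ α < β < 1, let g(j) = ((1−α)+(1−β)j)/(j+1), and let A be the S×S real matrix with A_{i,j} = g(j) for i ≤ j and 0 for i > j. Let P* ∈ ℝ^S be a probability vector that does not lie in the span of the eigenspaces of A corresponding to the eigenvalues g(1), …, g(S−1). Set s_n = Σ_{i=0}^{S−1} (A^n P*)_i. Then s_n ≠ 0 for all sufficiently large n, and A^n P*/s_n converges, as n → ∞, to the standard basis vector e_0 = (1, 0, …, 0); that is, the iterated Katz partial summations converge to the deterministic distribution concentrated at 0. -/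

import Mathlib

/-!
`A` is upper triangular with diagonal `g 0 > g 1 > ⋯ > g (S - 1) > 0`, so it has a basis of
eigenvectors with distinct eigenvalues, and `e₀` is the eigenvector for the dominant eigenvalue
`g 0`. Hence `P = c • e₀ + w` with `w` in the span of the other eigenvectors, and `c ≠ 0` because
`P` is not in that span. Then `A ^ n *ᵥ P = (c * g 0 ^ n) • e₀ + A ^ n *ᵥ w` with
`A ^ n *ᵥ w = O(g 1 ^ n)`, so `(g 0 ^ n)⁻¹ • A ^ n *ᵥ P → c • e₀`; normalizing by the coordinate
sum is invariant under rescaling and turns this into convergence to `e₀`.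
-/

open Filter Finset Asymptotics Topology

namespace Module.End

theorem pow_apply_of_apply_eq_smul {R M : Type*} [CommSemiring R] [AddCommMonoid M] [Module R M]
    {f : End R M} {μ : R} {u : M} (h : f u = μ • u) (n : ℕ) : (f ^ n) u = μ ^ n • u := by
  induction n with
  | zero => simp
  | succ n ih => rw [pow_succ', mul_apply, ih, map_smul, h, smul_smul, pow_succ]

section Normed

variable {𝕜 E : Type*} [NormedField 𝕜] [NormedAddCommGroup E] [NormedSpace 𝕜 E]

theorem isBigO_pow_apply_of_mem_span (f : End 𝕜 E) {r : ℝ} {w : E}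
    (hw : w ∈ Submodule.span 𝕜 {u | ∃ ν : 𝕜, ‖ν‖ ≤ r ∧ f u = ν • u}) :
    (fun n : ℕ => (f ^ n) w) =O[atTop] fun n => r ^ n := by
  induction hw using Submodule.span_induction with
  | mem u hu =>
    obtain ⟨ν, hνr, hfu⟩ := hu
    refine IsBigO.of_bound ‖u‖ (Eventually.of_forall fun n => ?_)
    rw [pow_apply_of_apply_eq_smul hfu, norm_smul, norm_pow, norm_pow, Real.norm_eq_abs,
      mul_comm]
    gcongr
    exact hνr.trans (le_abs_self r)
  | zero => simpa using isBigO_zero _ _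
  | add x y _ _ hx hy => simpa using hx.add hy
  | smul a x _ hx => exact (hx.const_smul_left a).congr_left fun n => by simp

theorem tendsto_inv_pow_smul_pow_apply (f : End 𝕜 E) {μ : 𝕜} {r : ℝ} {e w : E} (c : 𝕜)
    (he : f e = μ • e) (hw : w ∈ Submodule.span 𝕜 {u | ∃ ν : 𝕜, ‖ν‖ ≤ r ∧ f u = ν • u})
    (hr0 : 0 ≤ r) (hr : r < ‖μ‖) :
    Tendsto (fun n : ℕ => (μ ^ n)⁻¹ • (f ^ n) (c • e + w)) atTop (𝓝 (c • e)) := by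
  have hμ : μ ≠ 0 := norm_pos_iff.mp (hr0.trans_lt hr)
  have hdecay : Tendsto (fun n : ℕ => (μ ^ n)⁻¹ • (f ^ n) w) atTop (𝓝 0) := by
    have hO := ((isBigO_refl (fun n : ℕ => (μ ^ n)⁻¹) atTop).norm_right).smul
      (f.isBigO_pow_apply_of_mem_span hw)
    refine hO.trans_tendsto ?_
    simpa [norm_inv, norm_pow, ← div_eq_inv_mul, ← div_pow] using
      tendsto_pow_atTop_nhds_zero_of_lt_one (div_nonneg hr0 (norm_nonneg _))
        ((div_lt_one (hr0.trans_lt hr)).mpr hr)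
  have hsplit (n : ℕ) : (μ ^ n)⁻¹ • (f ^ n) (c • e + w) = c • e + (μ ^ n)⁻¹ • (f ^ n) w := by
    rw [map_add, map_smul, pow_apply_of_apply_eq_smul he, smul_add, smul_comm c,
      inv_smul_smul₀ (pow_ne_zero n hμ)]
  simp only [hsplit]
  simpa using (tendsto_const_nhds (x := c • e)).add hdecay

end Normed

theorem span_singleton_sup_iSup_eigenspace_eq_top {K V ι : Type*} [Field K] [AddCommGroup V]
    [Module K V] [FiniteDimensional K V] [Fintype ι] [DecidableEq ι] (f : End K V) {μ : ι → K}
    (hμ : Function.Injective μ) (hμf : ∀ i, f.HasEigenvalue (μ i))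
    (hcard : Fintype.card ι = Module.finrank K V) {i₀ : ι} {e : V}
    (he : f.HasEigenvector (μ i₀) e) :
    K ∙ e ⊔ ⨆ (i) (_ : i ≠ i₀), f.eigenspace (μ i) = ⊤ := by
  choose v hv using fun i => (hμf i).exists_hasEigenvector
  set v' := Function.update v i₀ e
  have hv' (i : ι) : f.HasEigenvector (μ i) (v' i) := by
    rcases eq_or_ne i i₀ with rfl | hi
    · simpa [v'] using he
    · simpa [v', hi] using hv i
  rw [eq_top_iff, ← (eigenvectors_linearIndependent' f μ hμ v' hv').span_eq_top_of_card_eq_finrank'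
    hcard, Submodule.span_le]
  rintro _ ⟨i, rfl⟩
  rcases eq_or_ne i i₀ with rfl | hi
  · simpa [v'] using Submodule.mem_sup_left (Submodule.mem_span_singleton_self e)
  · exact Submodule.mem_sup_right (Submodule.mem_iSup_of_mem i
      (Submodule.mem_iSup_of_mem hi (hv' i).1))

end Module.End

theorem tendsto_inv_apply_smul_of_tendsto_smul {𝕜 E ι : Type*} [NormedField 𝕜]
    [NormedAddCommGroup E] [NormedSpace 𝕜 E] {l : Filter ι} (φ : E →L[𝕜] 𝕜) {x : ι → E}
    {t : ι → 𝕜} {y : E} (ht : ∀ i, t i ≠ 0) (hx : Tendsto (fun i => t i • x i) l (𝓝 y))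
    (hy : φ y ≠ 0) :
    (∀ᶠ i in l, φ (x i) ≠ 0) ∧ Tendsto (fun i => (φ (x i))⁻¹ • x i) l (𝓝 ((φ y)⁻¹ • y)) := by
  have hφ : Tendsto (fun i => t i * φ (x i)) l (𝓝 (φ y)) := by
    simpa [Function.comp_def] using (φ.continuous.tendsto y).comp hx
  refine ⟨(hφ.eventually_ne hy).mono fun i hi => right_ne_zero_of_mul hi, ?_⟩
  refine ((hφ.inv₀ hy).smul hx).congr fun i => ?_
  rw [smul_smul, mul_inv_rev, mul_assoc, inv_mul_cancel₀ (ht i), mul_one]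

namespace Matrix

variable {n K : Type*} [Fintype n] [DecidableEq n]

theorem toLin'_pow_apply [CommSemiring K] (A : Matrix n n K) (k : ℕ) (v : n → K) :
    (toLin' A ^ k) v = (A ^ k) *ᵥ v := by
  rw [← toLinAlgEquiv'_apply, map_pow]
  rfl

variable [LinearOrder n]

theorem IsUpperTriangular.hasEigenvalue_toLin' [Field K] {A : Matrix n n K}
    (hA : A.IsUpperTriangular) (i : n) : Module.End.HasEigenvalue (toLin' A) (A i i) := by
  rw [Module.End.hasEigenvalue_iff_isRoot_charpoly, charpoly_toLin',
    charpoly_of_isUpperTriangular _ hA, Polynomial.IsRoot, Polynomial.eval_prod]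
  exact prod_eq_zero (mem_univ i) (by simp)

theorem IsUpperTriangular.mulVec_single_of_forall_le [CommSemiring K] {A : Matrix n n K}
    (hA : A.IsUpperTriangular) {i₀ : n} (hi₀ : ∀ i, i₀ ≤ i) (x : K) :
    A *ᵥ Pi.single i₀ x = A i₀ i₀ • Pi.single i₀ x := by
  ext i
  rcases eq_or_ne i i₀ with rfl | hi
  · simp [mul_comm]
  · simp [hi, hA ((hi₀ i).lt_of_ne' hi)]

theorem IsUpperTriangular.exists_eq_smul_single_add_mem_span [Field K] {A : Matrix n n K}
    (hA : A.IsUpperTriangular) (hdiag : Function.Injective A.diag) {i₀ : n}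
    (hi₀ : ∀ i, i₀ ≤ i) (v : n → K) :
    ∃ c : K, ∃ w ∈ Submodule.span K {u | ∃ j ≠ i₀, A *ᵥ u = A j j • u},
      v = c • Pi.single i₀ 1 + w := by
  have htop := Module.End.span_singleton_sup_iSup_eigenspace_eq_top (toLin' A) hdiag
    hA.hasEigenvalue_toLin' (by simp)
    ⟨Module.End.mem_eigenspace_iff.mpr (hA.mulVec_single_of_forall_le hi₀ 1), by simp⟩
  obtain ⟨_, he, w, hw, rfl⟩ := Submodule.mem_sup.mp (htop ▸ Submodule.mem_top (x := v))
  obtain ⟨c, rfl⟩ := Submodule.mem_span_singleton.mp he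
  have hle : (⨆ (j) (_ : j ≠ i₀), Module.End.eigenspace (toLin' A) (A.diag j)) ≤
      Submodule.span K {u | ∃ j ≠ i₀, A *ᵥ u = A j j • u} :=
    iSup₂_le fun j hj u hu => Submodule.subset_span ⟨j, hj, Module.End.mem_eigenspace_iff.mp hu⟩
  exact ⟨c, w, hle hw, rfl⟩

end Matrix

noncomputable def katzWeight (α β : ℝ) (j : ℕ) : ℝ := ((1 - α) + (1 - β) * j) / (j + 1)

theorem katzWeight_strictAnti {α β : ℝ} (hαβ : α < β) : StrictAnti (katzWeight α β) := by
  intro i j hij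
  have hij' : (i : ℝ) + 1 ≤ j := by exact_mod_cast hij
  rw [katzWeight, katzWeight, div_lt_div_iff₀ (by positivity) (by positivity)]
  nlinarith

theorem katzWeight_pos {α β : ℝ} (hαβ : α < β) (hβ : β < 1) (j : ℕ) : 0 < katzWeight α β j := by
  have : 0 < 1 - α := by linarith
  have : 0 < 1 - β := by linarith
  unfold katzWeight
  positivity

theorem stmt_8 (S : ℕ) (hS : 2 ≤ S) (α β : ℝ) (hαβ : α < β) (hβ : β < 1)
    (g : ℕ → ℝ) (hg : ∀ j : ℕ, g j = ((1 - α) + (1 - β) * j) / (j + 1))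
    (A : Matrix (Fin S) (Fin S) ℝ)
    (hA : ∀ i j : Fin S, A i j = if (i : ℕ) ≤ (j : ℕ) then g j else 0)
    (P : Fin S → ℝ)
    (hPspan : P ∉ Submodule.span ℝ
      {u : Fin S → ℝ | ∃ j : Fin S, (j : ℕ) ≠ 0 ∧ A.mulVec u = g j • u})
    (s : ℕ → ℝ) (hs : ∀ n, s n = ∑ i, (A ^ n).mulVec P i) :
    (∀ᶠ n in atTop, s n ≠ 0) ∧
      Tendsto (fun n : ℕ => (s n)⁻¹ • (A ^ n).mulVec P) atTop
        (nhds (Pi.single (⟨0, by omega⟩ : Fin S) (1 : ℝ))) := by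
  obtain rfl : g = katzWeight α β := funext hg
  obtain rfl : s = fun n => ∑ i, (A ^ n).mulVec P i := funext hs
  have hg_anti := katzWeight_strictAnti hαβ
  have hg_pos := katzWeight_pos hαβ hβ
  have hA_tri : A.IsUpperTriangular := fun i j hji => by rw [hA, if_neg]; exact not_le.mpr hji
  have hA_diag (i : Fin S) : A i i = katzWeight α β i := by simp [hA]
  set i₀ : Fin S := ⟨0, by omega⟩
  have hi₀ (i : Fin S) : i₀ ≤ i := Nat.zero_le i
  obtain ⟨c, w, hw, rfl⟩ := hA_tri.exists_eq_smul_single_add_mem_span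
    (fun i j h => Fin.val_injective (hg_anti.injective (by simpa [hA_diag] using h))) hi₀ P
  have hc : c ≠ 0 := by
    rintro rfl
    refine hPspan (Submodule.span_mono ?_ (by simpa using hw))
    rintro u ⟨j, hj, hu⟩
    exact ⟨j, fun h => hj (Fin.ext h), hA_diag j ▸ hu⟩
  have hw_decay : w ∈ Submodule.span ℝ
      {u | ∃ ν : ℝ, ‖ν‖ ≤ katzWeight α β 1 ∧ Matrix.toLin' A u = ν • u} := by
    refine Submodule.span_mono ?_ hw
    rintro u ⟨j, hj, hu⟩
    refine ⟨A j j, ?_, hu⟩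
    rw [hA_diag, Real.norm_of_nonneg (hg_pos j).le]
    exact hg_anti.antitone (Nat.one_le_iff_ne_zero.mpr fun h => hj (Fin.ext h))
  have hconv := Module.End.tendsto_inv_pow_smul_pow_apply (Matrix.toLin' A) c
    (hA_tri.mulVec_single_of_forall_le hi₀ 1) hw_decay (hg_pos 1).le
    (by rw [hA_diag, Real.norm_of_nonneg (hg_pos _).le]; exact hg_anti zero_lt_one)
  simp only [Matrix.toLin'_pow_apply] at hconv
  simpa [hc] using tendsto_inv_apply_smul_of_tendsto_smul
    (∑ i : Fin S, ContinuousLinearMap.proj (R := ℝ) (φ := fun _ : Fin S => ℝ) i)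
    (fun n => inv_ne_zero (pow_ne_zero n (by simpa [hA_diag] using (hg_pos 0).ne'))) hconv
    (by simp [hc])
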